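/- arXiv:1706.08853 — 2 statements merged into one kernel-verified Lean document; each statement's English description precedes it below -/
import Mathlib

section
/- Let K ∈ L²(ℝ) be such that x ↦ x^j K(x) ∈ L²(ℝ) for some integer j ≥ 2. Then for any ζ ∈ L²(ℝ) with compact support and almost every x ∉ supp(ζ), one has |(K * ζ)(x)| ≤ C dist(x, supp ζ)^{-j} ‖ζ‖_{L²}, where C = (2π)^{-1/2} ‖x^j K(x)‖_{L²}. -/
/-!
For `y ∈ supp ζ` we have `|x - y| ≥ dist(x, supp ζ)`, so
`dist(x, supp ζ)^j |K(x - y)| ≤ |(x - y)^j K(x - y)|`. Integrating against `|ζ|` and applying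
Cauchy–Schwarz bounds `dist(x, supp ζ)^j ∫ |K(x - y) ζ(y)| dy` by `‖x^j K‖₂ ‖ζ‖₂`, since
`y ↦ x - y` preserves Lebesgue measure.
-/

open MeasureTheory Metric

theorem integral_abs_mul_le_eLpNorm_two_mul {α : Type*} [MeasurableSpace α] {μ : Measure α}
    {f g : α → ℝ} (hf : MemLp f 2 μ) (hg : MemLp g 2 μ) :
    ∫ a, |f a * g a| ∂μ ≤ (eLpNorm f 2 μ).toReal * (eLpNorm g 2 μ).toReal := by
  have holder := eLpNorm_smul_le_mul_eLpNorm (p := 2) (q := 2) (r := 1) hg.1 hf.1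
  calc ∫ a, |f a * g a| ∂μ = (eLpNorm (f • g) 1 μ).toReal := by
        rw [eLpNorm_one_eq_lintegral_enorm, ← integral_norm_eq_lintegral_enorm (hf.1.smul hg.1)]
        simp only [smul_eq_mul, Pi.mul_apply, Real.norm_eq_abs]
    _ ≤ (eLpNorm f 2 μ * eLpNorm g 2 μ).toReal :=
        ENNReal.toReal_mono (ENNReal.mul_ne_top hf.eLpNorm_ne_top hg.eLpNorm_ne_top) holder
    _ = (eLpNorm f 2 μ).toReal * (eLpNorm g 2 μ).toReal := ENNReal.toReal_mul

theorem infDist_pow_mul_abs_le {s : Set ℝ} {x y : ℝ} (hy : y ∈ s) (j : ℕ) (k : ℝ) :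
    infDist x s ^ j * |k| ≤ |(x - y) ^ j * k| := by
  rw [abs_mul, abs_pow]
  have hdist : infDist x s ≤ |x - y| := infDist_le_dist_of_mem hy
  gcongr
  exact infDist_nonneg

theorem infDist_pow_mul_integral_abs_conv_le (j : ℕ) {K ζ : ℝ → ℝ}
    (hKj : MemLp (fun x : ℝ => x ^ j * K x) 2 volume) (hζ : MemLp ζ 2 volume) (x : ℝ) :
    infDist x (tsupport ζ) ^ j * ∫ y, |K (x - y) * ζ y| ≤
      (eLpNorm (fun x : ℝ => x ^ j * K x) 2 volume).toReal * (eLpNorm ζ 2 volume).toReal := by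
  have hsub : MeasurePreserving (x - ·) volume volume := Measure.measurePreserving_sub_left _ x
  have hpt : ∀ y, infDist x (tsupport ζ) ^ j * |K (x - y) * ζ y| ≤
      |((fun x : ℝ => x ^ j * K x) ∘ (x - ·)) y * ζ y| := by
    intro y
    by_cases hy : ζ y = 0
    · simp [hy]
    · rw [abs_mul, abs_mul _ (ζ y), ← mul_assoc]
      gcongr
      exact infDist_pow_mul_abs_le (subset_tsupport ζ hy) j _
  have hF := hKj.comp_measurePreserving hsub
  calc infDist x (tsupport ζ) ^ j * ∫ y, |K (x - y) * ζ y|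
      = ∫ y, infDist x (tsupport ζ) ^ j * |K (x - y) * ζ y| := (integral_const_mul _ _).symm
    _ ≤ ∫ y, |((fun x : ℝ => x ^ j * K x) ∘ (x - ·)) y * ζ y| :=
        integral_mono_of_nonneg
          (.of_forall fun _ => mul_nonneg (pow_nonneg infDist_nonneg j) (abs_nonneg _))
          (hF.integrable_mul hζ).abs (.of_forall hpt)
    _ ≤ _ := eLpNorm_comp_measurePreserving hKj.1 hsub ▸
        integral_abs_mul_le_eLpNorm_two_mul hF hζ

theorem stmt9_general (j : ℕ) (K : ℝ → ℝ)
    (hKj : MemLp (fun x : ℝ => x ^ j * K x) 2 volume)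
    (ζ : ℝ → ℝ) (hζ : MemLp ζ 2 volume) :
    ∀ᵐ x : ℝ, x ∉ tsupport ζ →
      |(2 * Real.pi) ^ (-(1 : ℝ) / 2) * ∫ y : ℝ, K (x - y) * ζ y| ≤
        ((2 * Real.pi) ^ (-(1 : ℝ) / 2) *
            (eLpNorm (fun x : ℝ => x ^ j * K x) 2 volume).toReal) *
          Metric.infDist x (tsupport ζ) ^ (-(j : ℝ)) *
          (eLpNorm ζ 2 volume).toReal := by
  refine .of_forall fun x hx => ?_
  rcases (tsupport ζ).eq_empty_or_nonempty with hempty | hne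
  · simp [tsupport_eq_empty_iff.1 hempty]
  have hd : 0 < infDist x (tsupport ζ) := ((isClosed_tsupport ζ).notMem_iff_infDist_pos hne).1 hx
  have hbound := infDist_pow_mul_integral_abs_conv_le j hKj hζ x
  rw [← le_inv_mul_iff₀ (by positivity), ← Real.rpow_natCast, ← Real.rpow_neg hd.le] at hbound
  rw [abs_mul, abs_of_pos (by positivity), mul_assoc, mul_assoc]
  gcongr
  calc |∫ y, K (x - y) * ζ y| ≤ ∫ y, |K (x - y) * ζ y| := abs_integral_le_integral_abs
    _ ≤ _ := hbound
    _ = _ := by ring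

/-- Kernel decay: if `K, x^j K ∈ L²(ℝ)` with `j ≥ 2`, and `ζ ∈ L²(ℝ)` is compactly
supported, then for a.e. `x ∉ supp ζ`,
`|(K ⋆ ζ)(x)| ≤ (2π)^{-1/2} ‖x^j K‖_{L²} · dist(x, supp ζ)^{-j} · ‖ζ‖_{L²}`,
where the convolution carries the normalization `(2π)^{-1/2}` of the paper. -/
theorem stmt9 (j : ℕ) (hj : 2 ≤ j) (K : ℝ → ℝ) (hK : MemLp K 2 volume)
    (hKj : MemLp (fun x : ℝ => x ^ j * K x) 2 volume)
    (ζ : ℝ → ℝ) (hζ : MemLp ζ 2 volume) (hsupp : HasCompactSupport ζ) :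
    ∀ᵐ x : ℝ, x ∉ tsupport ζ →
      |(2 * Real.pi) ^ (-(1 : ℝ) / 2) * ∫ y : ℝ, K (x - y) * ζ y| ≤
        ((2 * Real.pi) ^ (-(1 : ℝ) / 2) *
            (eLpNorm (fun x : ℝ => x ^ j * K x) 2 volume).toReal) *
          Metric.infDist x (tsupport ζ) ^ (-(j : ℝ)) *
          (eLpNorm ζ 2 volume).toReal :=
  stmt9_general j K hKj ζ hζ
end

section
/- Let θ ∈ [0,1). The function F(k) = √(3/(|k| tanh |k|) - 3/|k|²) (extended by F(0)=1) satisfies 0 < F(k) ≤ 1 for all k ∈ ℝ, F is even, and there exist constants C₋, C₊ > 0 such that C₋(1+|k|)^{-1/2} ≤ F(k) ≤ C₊(1+|k|)^{-1/2} for all k ∈ ℝ. -/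
/-!
Write `s = sinh x`, `c = cosh x`. For `x > 0` the square of the symbol is
`3 (x c - s) / (x² s)`, so every bound on it is a polynomial inequality in `x, s, c`. The four
basic ones (`s < x c`, `x³/3 ≤ x c - s`, `3 x c ≤ (3 + x²) s`, `x c ≤ (1 + x) s`) are equalities
at `x = 0` and follow by differentiating. They give `0 < F² ≤ min (1, 3/x)` and
`F² > 1 / cosh x`; the last bound suffices for `x ≤ 2`, and `coth x ≥ 1` for `x ≥ 2`.
-/

open Real Set

lemma nonneg_of_hasDerivAt_of_nonneg {f f' : ℝ → ℝ} (hf : ∀ x, HasDerivAt f (f' x) x)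
    (h₀ : 0 ≤ f 0) (hf' : ∀ x, 0 < x → 0 ≤ f' x) {x : ℝ} (hx : 0 ≤ x) : 0 ≤ f x := by
  have hmono : MonotoneOn f (Ici 0) :=
    monotoneOn_of_hasDerivWithinAt_nonneg (convex_Ici 0)
      (fun y _ => (hf y).continuousAt.continuousWithinAt) (fun y _ => (hf y).hasDerivWithinAt)
      (fun y hy => hf' y (by simpa using hy))
  exact h₀.trans (hmono self_mem_Ici hx hx)

lemma pos_of_hasDerivAt_of_pos {f f' : ℝ → ℝ} (hf : ∀ x, HasDerivAt f (f' x) x)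
    (h₀ : 0 ≤ f 0) (hf' : ∀ x, 0 < x → 0 < f' x) {x : ℝ} (hx : 0 < x) : 0 < f x := by
  have hmono : StrictMonoOn f (Ici 0) :=
    strictMonoOn_of_hasDerivWithinAt_pos (convex_Ici 0)
      (fun y _ => (hf y).continuousAt.continuousWithinAt) (fun y _ => (hf y).hasDerivWithinAt)
      (fun y hy => hf' y (by simpa using hy))
  exact h₀.trans_lt (hmono self_mem_Ici hx.le hx)

lemma sinh_lt_mul_cosh {x : ℝ} (hx : 0 < x) : sinh x < x * cosh x := by
  have key := pos_of_hasDerivAt_of_pos (f := fun y => y * cosh y - sinh y)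
    (fun y => ((hasDerivAt_id y).mul (hasDerivAt_cosh y)).sub (hasDerivAt_sinh y))
    (by simp) (fun y hy => by simpa using mul_pos hy (sinh_pos_iff.2 hy)) hx
  simpa using key

lemma cube_div_three_le_mul_cosh_sub_sinh {x : ℝ} (hx : 0 ≤ x) :
    x ^ 3 / 3 ≤ x * cosh x - sinh x := by
  have key := nonneg_of_hasDerivAt_of_nonneg (f := fun y => y * cosh y - sinh y - y ^ 3 / 3)
    (fun y => (((hasDerivAt_id y).mul (hasDerivAt_cosh y)).sub (hasDerivAt_sinh y)).sub
      ((hasDerivAt_pow 3 y).div_const 3))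
    (by simp) (fun y hy => by
      have := self_le_sinh_iff.2 hy.le
      simp only [id]; nlinarith) hx
  simpa using key

lemma three_mul_mul_cosh_le {x : ℝ} (hx : 0 ≤ x) : 3 * x * cosh x ≤ (3 + x ^ 2) * sinh x := by
  have key := nonneg_of_hasDerivAt_of_nonneg
    (f := fun y => (3 + y ^ 2) * sinh y - 3 * y * cosh y)
    (fun y => (((hasDerivAt_pow 2 y).const_add 3).mul (hasDerivAt_sinh y)).sub
      (((hasDerivAt_id y).const_mul 3).mul (hasDerivAt_cosh y)))
    (by simp) (fun y hy => by
      have := sinh_lt_mul_cosh hy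
      norm_num; nlinarith) hx
  simpa using key

lemma mul_cosh_le_one_add_mul_sinh {x : ℝ} (hx : 0 ≤ x) : x * cosh x ≤ (1 + x) * sinh x := by
  have key := nonneg_of_hasDerivAt_of_nonneg (f := fun y => (1 + y) * sinh y - y * cosh y)
    (fun y => (((hasDerivAt_id y).const_add 1).mul (hasDerivAt_sinh y)).sub
      ((hasDerivAt_id y).mul (hasDerivAt_cosh y)))
    (by simp) (fun y hy => by
      have := sinh_lt_cosh y
      have := sinh_pos_iff.2 hy
      simp only [id]; nlinarith) hx
  simpa using key

lemma cosh_two_lt_four : cosh 2 < 4 := by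
  have h₁ : exp 2 < 7.4 := by
    rw [show (2 : ℝ) = 1 + 1 by norm_num, exp_add]
    nlinarith [exp_one_lt_d9, exp_pos 1]
  have h₂ : 3 ≤ exp 2 := by linarith [add_one_le_exp 2]
  have h₃ : exp (-2) ≤ 1 / 3 := by
    rw [exp_neg, inv_le_comm₀ (exp_pos 2) (by norm_num)]
    linarith
  rw [cosh_eq]
  linarith

noncomputable def dispersionSq (x : ℝ) : ℝ := 3 / (x * tanh x) - 3 / x ^ 2

section dispersionSq

variable {x : ℝ}

lemma dispersionSq_eq (hx : 0 < x) :
    dispersionSq x = 3 * (x * cosh x - sinh x) / (x ^ 2 * sinh x) := by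
  have := (sinh_pos_iff.2 hx).ne'
  rw [dispersionSq, tanh_eq_sinh_div_cosh]
  field_simp

lemma dispersionSq_pos (hx : 0 < x) : 0 < dispersionSq x := by
  have := sinh_pos_iff.2 hx
  rw [dispersionSq_eq hx]
  exact div_pos (by linarith [sinh_lt_mul_cosh hx]) (by positivity)

lemma dispersionSq_le_one (hx : 0 < x) : dispersionSq x ≤ 1 := by
  have := sinh_pos_iff.2 hx
  rw [dispersionSq_eq hx, div_le_one (by positivity)]
  linarith [three_mul_mul_cosh_le hx.le]

lemma dispersionSq_le_three_div (hx : 0 < x) : dispersionSq x ≤ 3 / x := by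
  have := sinh_pos_iff.2 hx
  rw [dispersionSq_eq hx, div_le_div_iff₀ (by positivity) hx]
  nlinarith [mul_cosh_le_one_add_mul_sinh hx.le]

lemma inv_cosh_lt_dispersionSq (hx : 0 < x) : (cosh x)⁻¹ < dispersionSq x := by
  have := sinh_pos_iff.2 hx
  have := cosh_pos x
  rw [dispersionSq_eq hx, inv_eq_one_div, div_lt_div_iff₀ (cosh_pos x) (by positivity)]
  nlinarith [sinh_lt_mul_cosh hx, cube_div_three_le_mul_cosh_sub_sinh hx.le, pow_pos hx 2]

lemma three_mul_sub_one_div_sq_le_dispersionSq (hx : 0 < x) :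
    3 * (x - 1) / x ^ 2 ≤ dispersionSq x := by
  have := sinh_pos_iff.2 hx
  rw [dispersionSq_eq hx, div_le_div_iff₀ (by positivity) (by positivity)]
  nlinarith [sinh_lt_cosh x, pow_pos hx 2, pow_pos hx 3]

lemma dispersionSq_le_four_div (hx : 0 < x) : dispersionSq x ≤ 4 / (1 + x) := by
  rcases le_total x 3 with h | h
  · calc dispersionSq x ≤ 1 := dispersionSq_le_one hx
      _ ≤ 4 / (1 + x) := by rw [le_div_iff₀ (by positivity)]; linarith
  · calc dispersionSq x ≤ 3 / x := dispersionSq_le_three_div hx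
      _ ≤ 4 / (1 + x) := by rw [div_le_div_iff₀ hx (by positivity)]; linarith

lemma quarter_div_le_dispersionSq (hx : 0 < x) : 1 / 4 / (1 + x) ≤ dispersionSq x := by
  rcases le_total x 2 with h | h
  · calc 1 / 4 / (1 + x) ≤ (cosh 2)⁻¹ := by
          rw [div_div, one_div, inv_le_inv₀ (by positivity) (cosh_pos 2)]
          linarith [cosh_two_lt_four]
      _ ≤ (cosh x)⁻¹ := by
          rw [inv_le_inv₀ (cosh_pos 2) (cosh_pos x), cosh_le_cosh, abs_of_pos hx]
          simpa using h
      _ ≤ dispersionSq x := (inv_cosh_lt_dispersionSq hx).le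
  · calc 1 / 4 / (1 + x) ≤ 3 * (x - 1) / x ^ 2 := by
          rw [div_div, div_le_div_iff₀ (by positivity) (by positivity)]
          nlinarith
      _ ≤ dispersionSq x := three_mul_sub_one_div_sq_le_dispersionSq hx

end dispersionSq

lemma mul_rpow_neg_half {c t : ℝ} (hc : 0 ≤ c) (ht : 0 ≤ t) :
    c * t ^ (-(1 : ℝ) / 2) = √(c ^ 2 / t) := by
  rw [sqrt_div' _ ht, sqrt_sq hc, sqrt_eq_rpow, neg_div, rpow_neg ht, div_eq_mul_inv c]

/-- The improved-dispersion symbol `F(k) = √(3/(|k| tanh|k|) - 3/k²)` (with `F(0)=1`)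
satisfies `0 < F ≤ 1`, is even, and is comparable to `(1+|k|)^{-1/2}`. -/
theorem stmt17 :
    let F : ℝ → ℝ := fun k =>
      if k = 0 then 1 else Real.sqrt (3 / (|k| * Real.tanh |k|) - 3 / k ^ 2)
    (∀ k : ℝ, 0 < F k ∧ F k ≤ 1) ∧
    (∀ k : ℝ, F (-k) = F k) ∧
    ∃ Cm > (0 : ℝ), ∃ Cp > (0 : ℝ), ∀ k : ℝ,
      Cm * (1 + |k|) ^ (-(1 : ℝ) / 2) ≤ F k ∧
      F k ≤ Cp * (1 + |k|) ^ (-(1 : ℝ) / 2) := by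
  intro F
  have hF : ∀ k ≠ 0, F k = √(dispersionSq |k|) := fun k hk => by
    simp only [F, if_neg hk, dispersionSq, sq_abs]
  refine ⟨fun k => ?_, fun k => by simp only [F, neg_eq_zero, abs_neg, neg_sq],
    1 / 2, by norm_num, 2, by norm_num, fun k => ?_⟩
  · rcases eq_or_ne k 0 with rfl | hk
    · simp [F]
    have ha := abs_pos.2 hk
    rw [hF k hk]
    exact ⟨sqrt_pos.2 (dispersionSq_pos ha), sqrt_le_one.2 (dispersionSq_le_one ha)⟩
  · rcases eq_or_ne k 0 with rfl | hk
    · norm_num [F]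
    have ha := abs_pos.2 hk
    rw [hF k hk, mul_rpow_neg_half (by norm_num) (by positivity),
      mul_rpow_neg_half (by norm_num) (by positivity)]
    norm_num only
    exact ⟨sqrt_le_sqrt (quarter_div_le_dispersionSq ha),
      sqrt_le_sqrt (dispersionSq_le_four_div ha)⟩
end
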